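/- arXiv:2301.13804 — 6 statements merged into one kernel-verified Lean document; each statement's English description precedes it below -/
import Mathlib

section
/- For every instance of the assignment problem with uncertain priorities (n agents, m ≥ n items, strict agent preferences, and a finitely supported random priority Σ), there exists a random assignment P that simultaneously satisfies ordinal efficiency (OE), stochastic envy-freeness (SEF), and ranked proportionality (PROP). (This is the guarantee of the Unit-Time Eating algorithm, Theorem on UTE.) -/
open Finset

/-- `X` stochastically dominates `Y` under the ranking `π` (a bijection from items to ranks):
for every rank `t`, the cumulative probability of the `t` most-preferred items is at least
as large under `X` as under `Y`. -/
def SD {m : ℕ} (π : Equiv.Perm (Fin m)) (X Y : Fin m → ℝ) : Prop :=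
  ∀ t : Fin m, ∑ r ∈ Finset.Iic t, Y (π.symm r) ≤ ∑ r ∈ Finset.Iic t, X (π.symm r)

/-- A random assignment: an `n × m` matrix of nonnegative reals, each row summing to `1`
and each column summing to at most `1`. -/
def IsRandomAssignment {n m : ℕ} (P : Fin n → Fin m → ℝ) : Prop :=
  (∀ i j, 0 ≤ P i j) ∧ (∀ i, ∑ j, P i j = 1) ∧ (∀ j, ∑ i, P i j ≤ 1)

/-- A random priority: a (finitely supported) probability distribution over simple priorities
(bijections from agents to ranks). -/
def IsRandomPriority {n : ℕ} (ρ : Equiv.Perm (Fin n) → ℝ) : Prop :=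
  (∀ σ, 0 ≤ ρ σ) ∧ (∑ σ, ρ σ = 1)

/-- A lottery: a probability distribution over simple assignments (injective maps from
agents to items). -/
def IsLottery {n m : ℕ} (L : (Fin n → Fin m) → ℝ) : Prop :=
  (∀ f, 0 ≤ L f) ∧ (∑ f, L f = 1) ∧ (∀ f, L f ≠ 0 → Function.Injective f)

/-- The random assignment induced by a lottery: `p i j = Pr_{f ∼ L}[f i = j]`. -/
def induced {n m : ℕ} (L : (Fin n → Fin m) → ℝ) : Fin n → Fin m → ℝ :=
  fun i j => ∑ f ∈ Finset.univ.filter (fun f => f i = j), L f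

/-- `rankDist ρ i r = Pr_{σ ∼ Σ}[σ i = r]`, agent `i`'s rank distribution. -/
def rankDist {n : ℕ} (ρ : Equiv.Perm (Fin n) → ℝ) (i r : Fin n) : ℝ :=
  ∑ σ ∈ Finset.univ.filter (fun σ => σ i = r), ρ σ

/-- Ordinal efficiency: no other random assignment stochastically dominates `P`
for every agent. -/
def OE {n m : ℕ} (π : Fin n → Equiv.Perm (Fin m)) (P : Fin n → Fin m → ℝ) : Prop :=
  ¬ ∃ Q : Fin n → Fin m → ℝ, IsRandomAssignment Q ∧ Q ≠ P ∧ ∀ i, SD (π i) (Q i) (P i)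

/-- Stochastic envy-freeness: whenever `i`'s rank distribution (cumulatively)
stochastically dominates `j`'s, agent `i`'s allocation stochastically dominates `j`'s
under `i`'s preferences. -/
def SEF {n m : ℕ} (π : Fin n → Equiv.Perm (Fin m)) (ρ : Equiv.Perm (Fin n) → ℝ)
    (P : Fin n → Fin m → ℝ) : Prop :=
  ∀ i j : Fin n,
    (∀ t : Fin n, ∑ r ∈ Finset.Iic t, rankDist ρ j r ≤ ∑ r ∈ Finset.Iic t, rankDist ρ i r) →
    SD (π i) (P i) (P j)

/-- `Pr_{σ ∼ Σ}[σ i < σ j]`: the probability that agent `i` has higher priority than `j`. -/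
def prHigher {n : ℕ} (ρ : Equiv.Perm (Fin n) → ℝ) (i j : Fin n) : ℝ :=
  ∑ σ ∈ Finset.univ.filter (fun σ => σ i < σ j), ρ σ

/-- `Pr_{f ∼ L}[f i ≻_i f j]`: the probability that agent `i` prefers her own item to `j`'s. -/
def prPrefers {n m : ℕ} (π : Fin n → Equiv.Perm (Fin m)) (L : (Fin n → Fin m) → ℝ)
    (i j : Fin n) : ℝ :=
  ∑ f ∈ Finset.univ.filter (fun f => π i (f i) < π i (f j)), L f

/-- Likelihood envy-freeness: some lottery inducing `P` satisfies
`Pr[σ i < σ j] ≤ Pr[f i ≻_i f j]` for all agents `i`, `j`. -/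
def LEF {n m : ℕ} (π : Fin n → Equiv.Perm (Fin m)) (ρ : Equiv.Perm (Fin n) → ℝ)
    (P : Fin n → Fin m → ℝ) : Prop :=
  ∃ L : (Fin n → Fin m) → ℝ, IsLottery L ∧ induced L = P ∧
    ∀ i j : Fin n, prHigher ρ i j ≤ prPrefers π L i j

/-- 1-LEF: some lottery inducing `P` satisfies: whenever `i` has higher priority than `j`
with probability `1`, agent `i` prefers her item to `j`'s with probability `1`. -/
def OneLEF {n m : ℕ} (π : Fin n → Equiv.Perm (Fin m)) (ρ : Equiv.Perm (Fin n) → ℝ)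
    (P : Fin n → Fin m → ℝ) : Prop :=
  ∃ L : (Fin n → Fin m) → ℝ, IsLottery L ∧ induced L = P ∧
    ∀ i j : Fin n, i ≠ j → prHigher ρ i j = 1 → prPrefers π L i j = 1

/-- The baseline allocation of agent `i`: she gets her `r`-th preferred item with
probability `Pr[σ i = r]` (ranks beyond `n` get probability `0`). -/
def baseline {n m : ℕ} (π : Fin n → Equiv.Perm (Fin m)) (ρ : Equiv.Perm (Fin n) → ℝ)
    (i : Fin n) (j : Fin m) : ℝ :=
  ∑ σ ∈ Finset.univ.filter (fun σ => (σ i : ℕ) = (π i j : ℕ)), ρ σ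

/-- Ranked proportionality: every agent's allocation stochastically dominates
her baseline allocation. -/
def PROP {n m : ℕ} (π : Fin n → Equiv.Perm (Fin m)) (ρ : Equiv.Perm (Fin n) → ℝ)
    (P : Fin n → Fin m → ℝ) : Prop :=
  ∀ i : Fin n, SD (π i) (P i) (baseline π ρ i)

/-- Pareto efficiency of a simple assignment: no injective assignment makes every agent
weakly better off and some agent strictly better off. -/
def ParetoEff {n m : ℕ} (π : Fin n → Equiv.Perm (Fin m)) (f : Fin n → Fin m) : Prop :=
  ¬ ∃ g : Fin n → Fin m, Function.Injective g ∧
      (∀ i, g i = f i ∨ π i (g i) < π i (f i)) ∧ (∃ i, π i (g i) < π i (f i))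

/-- Envy-freeness of a simple assignment with respect to a simple priority. -/
def EnvyFree {n m : ℕ} (π : Fin n → Equiv.Perm (Fin m)) (σ : Equiv.Perm (Fin n))
    (f : Fin n → Fin m) : Prop :=
  ∀ i j : Fin n, σ i < σ j → π i (f i) < π i (f j)

/-!
During phase `r` (the unit time interval `[r, r + 1)`), every agent eats her favourite remaining
item at speed `Pr[σ i = r]`. These speeds sum to `1` over the agents, so after the `n` phases
every agent has eaten `1` and no item more than `1`. An agent only ever eats her favourite
remaining item, so every item she prefers to one she received had run out before; ranking the
items by the time they run out then rules out any ordinal improvement. As long as some item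
of a top set `T` of agent `i` remains, `i` eats inside `T`: by the time `T` is gone she has eaten
from it her whole cumulative speed so far, which is at least what any agent with a dominated
rank distribution can have eaten from `T` (SEF), and at least `Pr[σ i < #T]` because eating `#T`
items takes time `#T` (PROP).
-/

section

variable {n m : ℕ}

lemma sum_Iic_val_eq_sum_range {k : ℕ} (f : ℕ → ℝ) (t : Fin k) :
    ∑ r ∈ Iic t, f r = ∑ r ∈ range (t + 1), f r := by
  rw [Nat.range_succ_eq_Iic, ← Fin.map_valEmbedding_Iic, sum_map]
  rfl

lemma exists_filter_range_eq_range {p : ℕ → Prop} [DecidablePred p] (hp : Monotone p)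
    (K : ℕ) : ∃ k, (p k ∨ k = K) ∧ {l ∈ range K | ¬ p l} = range k := by
  have hex : ∃ k, p k ∨ k = K := ⟨K, Or.inr rfl⟩
  refine ⟨Nat.find hex, Nat.find_spec hex, ?_⟩
  ext l
  simp only [mem_filter, mem_range]
  constructor
  · rintro ⟨hlK, hl⟩
    by_contra! hle
    rcases Nat.find_spec hex with h | h
    · exact hl (hp hle h)
    · omega
  · intro hl
    have := Nat.find_min hex hl
    push Not at this
    exact ⟨lt_of_le_of_ne (hl.le.trans (Nat.find_min' hex (Or.inr rfl))) this.2, this.1⟩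

section

variable {π : Equiv.Perm (Fin m)}

def topItems (π : Equiv.Perm (Fin m)) (t : Fin m) : Finset (Fin m) := {b | π b ≤ t}

lemma topItems_eq_map (t : Fin m) : topItems π t = (Iic t).map π.symm.toEmbedding := by
  ext b
  simp [topItems]

lemma card_topItems (t : Fin m) : #(topItems π t) = t + 1 := by
  rw [topItems_eq_map, card_map, Fin.card_Iic]

lemma sum_Iic_symm (X : Fin m → ℝ) (t : Fin m) :
    ∑ r ∈ Iic t, X (π.symm r) = ∑ b ∈ topItems π t, X b := by
  rw [topItems_eq_map, sum_map]
  rfl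

lemma mem_topItems_of_le {t a b : Fin m} (ha : a ∈ topItems π t) (hba : π b ≤ π a) :
    b ∈ topItems π t := by
  simp only [topItems, mem_filter, mem_univ, true_and] at ha ⊢
  exact hba.trans ha

lemma sd_iff_topItems {X Y : Fin m → ℝ} :
    SD π X Y ↔ ∀ t, ∑ b ∈ topItems π t, Y b ≤ ∑ b ∈ topItems π t, X b := by
  simp only [SD, sum_Iic_symm]

lemma SD.exists_lt_of_lt {X Y : Fin m → ℝ} (h : SD π X Y) {b : Fin m} (hb : X b < Y b) :
    ∃ a, π a < π b ∧ Y a < X a := by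
  have hsd := h (π b)
  rw [← Iio_insert, sum_insert (by simp), sum_insert (by simp), Equiv.symm_apply_apply] at hsd
  obtain ⟨r, hr, hlt⟩ := exists_lt_of_sum_lt (s := Iio (π b))
    (f := fun r => Y (π.symm r)) (g := fun r => X (π.symm r)) (by linarith)
  exact ⟨π.symm r, by simpa using hr, hlt⟩

end

/-- An improving `Q` would have to take some of an item `b` from an agent, hence give her more
of an item `a` she prefers, hence take some of `a` from another agent, and so on down `κ`. -/
theorem oe_of_exhaustion_order {π : Fin n → Equiv.Perm (Fin m)} {P : Fin n → Fin m → ℝ}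
    (hP : IsRandomAssignment P) (κ : Fin m → ℕ)
    (hκ : ∀ i a b, 0 < P i b → π i a < π i b → ∑ i', P i' a = 1 ∧ κ a < κ b) :
    OE π P := by
  rintro ⟨Q, hQ, hQP, hdom⟩
  have hPQ : ∀ b i, P i b ≤ Q i b := by
    intro b
    induction hb : κ b using Nat.strong_induction_on generalizing b with
    | _ k ih =>
      intro i
      by_contra! hlt
      obtain ⟨a, hab, hPa⟩ := SD.exists_lt_of_lt (hdom i) hlt
      obtain ⟨hfull, hκab⟩ := hκ i a b ((hQ.1 i b).trans_lt hlt) hab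
      have hcol : ∑ i', P i' a < ∑ i', Q i' a :=
        sum_lt_sum (fun i' _ => ih _ (hb ▸ hκab) a rfl i') ⟨i, mem_univ _, hPa⟩
      linarith [hQ.2.2 a]
  refine hQP (funext fun i => (funext fun b => ?_).symm)
  have hrow : ∑ j, P i j = ∑ j, Q i j := by rw [hP.2.1, hQ.2.1]
  exact (sum_eq_sum_iff_of_le fun j _ => hPQ j i).1 hrow b (mem_univ b)

end

namespace UnitTimeEating

noncomputable section

variable {n m : ℕ}

def IsFavorite (π : Equiv.Perm (Fin m)) (B : Finset (Fin m)) (j : Fin m) : Prop :=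
  j ∉ B ∧ ∀ a ∉ B, π j ≤ π a

instance (π : Equiv.Perm (Fin m)) (B : Finset (Fin m)) (j : Fin m) :
    Decidable (IsFavorite π B j) :=
  inferInstanceAs (Decidable (_ ∧ _))

section Favorite

variable {π : Equiv.Perm (Fin m)} {B : Finset (Fin m)} {j : Fin m}

lemma IsFavorite.eq {b : Fin m} (hj : IsFavorite π B j) (hb : IsFavorite π B b) : b = j :=
  π.injective (le_antisymm (hb.2 j hj.1) (hj.2 b hb.1))

lemma exists_isFavorite (h : Bᶜ.Nonempty) : ∃ j, IsFavorite π B j := by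
  obtain ⟨j, hj, hmin⟩ := Bᶜ.exists_min_image π h
  exact ⟨j, mem_compl.1 hj, fun a ha => hmin a (mem_compl.2 ha)⟩

lemma IsFavorite.sum_ite (hj : IsFavorite π B j) (T : Finset (Fin m)) (x : ℝ) :
    ∑ b ∈ T, (if IsFavorite π B b then x else 0) = if j ∈ T then x else 0 := by
  rw [← sum_ite_eq' T j fun _ => x]
  exact sum_congr rfl fun b _ => if_congr ⟨hj.eq, fun h => h ▸ hj⟩ rfl rfl

end Favorite

structure State (m : ℕ) where
  phase : ℕ
  elapsed : ℝ
  supply : Fin m → ℝ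

def State.exhausted (s : State m) : Finset (Fin m) := {j | s.supply j = 0}

/-- `S i r` is agent `i`'s eating speed during phase `r`. -/
structure IsSpeedProfile (S : Fin n → ℕ → ℝ) : Prop where
  nonneg : ∀ i r, 0 ≤ S i r
  sum_eq_one : ∀ r < n, ∑ i, S i r = 1

def cumSpeed (S : Fin n → ℕ → ℝ) (i : Fin n) (k : ℕ) : ℝ := ∑ r ∈ range k, S i r

lemma cumSpeed_mono {S : Fin n → ℕ → ℝ} {i : Fin n} (h0 : ∀ r, 0 ≤ S i r) :
    Monotone (cumSpeed S i) :=
  fun _ _ hkl => sum_le_sum_of_subset_of_nonneg (range_mono hkl) fun r _ _ => h0 r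

lemma cumSpeed_eq_min {S : Fin n → ℕ → ℝ} {i : Fin n} (hvan : ∀ r, n ≤ r → S i r = 0)
    (k : ℕ) : cumSpeed S i k = cumSpeed S i (min k n) :=
  (sum_subset (range_mono (min_le_left k n)) fun r hr hr' => hvan r (by
    simp only [mem_range] at hr hr'
    omega)).symm

section Algorithm

variable (S : Fin n → ℕ → ℝ) (π : Fin n → Equiv.Perm (Fin m))

def rate (s : State m) (i : Fin n) (j : Fin m) : ℝ :=
  if IsFavorite (π i) s.exhausted j then S i s.phase else 0

def demand (s : State m) (j : Fin m) : ℝ := ∑ i, rate S π s i j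

/-- The process is simulated event by event: each step lasts until the current phase ends or
an item runs out, whichever comes first. After the `n`-th phase the steps have length `0`. -/
def stepLength (s : State m) : ℝ :=
  if s.phase < n then
    (insert (1 - s.elapsed) (({j | 0 < demand S π s j} : Finset (Fin m)).image
      fun j => s.supply j / demand S π s j)).min' (insert_nonempty _ _)
  else 0

def step (s : State m) : State m where
  phase := if stepLength S π s = 1 - s.elapsed then s.phase + 1 else s.phase
  elapsed := if stepLength S π s = 1 - s.elapsed then 0 else s.elapsed + stepLength S π s
  supply j := s.supply j - stepLength S π s * demand S π s j

def run : ℕ → State m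
  | 0 => ⟨0, 0, fun _ => 1⟩
  | k + 1 => step S π (run k)

def eats (k : ℕ) (i : Fin n) (j : Fin m) : ℝ :=
  stepLength S π (run S π k) * rate S π (run S π k) i j

def eaten (i : Fin n) (k : ℕ) : ℝ :=
  ∑ l ∈ range k, stepLength S π (run S π l) * S i (run S π l).phase

/-- Every step ends a phase or exhausts an item, so this many steps finish all `n` phases. -/
def numSteps (n m : ℕ) : ℕ := n * (m + 1) + m + 1

def assignment (i : Fin n) (j : Fin m) : ℝ := ∑ k ∈ range (numSteps n m), eats S π k i j

end Algorithm

structure State.Valid (n : ℕ) (s : State m) : Prop where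
  elapsed_nonneg : 0 ≤ s.elapsed
  elapsed_lt_one : s.elapsed < 1
  phase_add_elapsed_le : (s.phase : ℝ) + s.elapsed ≤ n
  supply_nonneg : ∀ j, 0 ≤ s.supply j
  supply_le_one : ∀ j, s.supply j ≤ 1
  sum_supply : ∑ j, s.supply j = m - (s.phase + s.elapsed)

section Step

variable {S : Fin n → ℕ → ℝ} {π : Fin n → Equiv.Perm (Fin m)} {s : State m}

lemma rate_nonneg (hS : IsSpeedProfile S) (s : State m) (i : Fin n) (j : Fin m) :
    0 ≤ rate S π s i j := by
  unfold rate
  split_ifs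
  exacts [hS.nonneg _ _, le_rfl]

lemma demand_nonneg (hS : IsSpeedProfile S) (s : State m) (j : Fin m) : 0 ≤ demand S π s j :=
  sum_nonneg fun i _ => rate_nonneg hS s i j

lemma demand_eq_zero_of_mem_exhausted {j : Fin m} (hj : j ∈ s.exhausted) :
    demand S π s j = 0 :=
  sum_eq_zero fun _ _ => if_neg fun h => h.1 hj

lemma sum_rate_eq {i : Fin n} {j : Fin m} (hj : IsFavorite (π i) s.exhausted j)
    (T : Finset (Fin m)) : ∑ b ∈ T, rate S π s i b = if j ∈ T then S i s.phase else 0 :=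
  hj.sum_ite T _

lemma sum_rate_le (hS : IsSpeedProfile S) (i : Fin n) (T : Finset (Fin m)) :
    ∑ b ∈ T, rate S π s i b ≤ S i s.phase := by
  by_cases h : ∃ j, IsFavorite (π i) s.exhausted j
  · obtain ⟨j, hj⟩ := h
    rw [sum_rate_eq hj]
    split_ifs
    exacts [le_rfl, hS.nonneg _ _]
  · simp only [not_exists] at h
    have hzero : ∀ b ∈ T, rate S π s i b = 0 := fun b _ => if_neg (h b)
    rw [sum_eq_zero hzero]
    exact hS.nonneg _ _

lemma sum_rate_of_subset_exhausted {T : Finset (Fin m)} (hT : T ⊆ s.exhausted) (i : Fin n) :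
    ∑ b ∈ T, rate S π s i b = 0 :=
  sum_eq_zero fun _ hb => if_neg fun h => h.1 (hT hb)

lemma sum_rate_of_not_subset_exhausted {i : Fin n} {T : Finset (Fin m)}
    (hT : ∀ a ∈ T, ∀ b, π i b ≤ π i a → b ∈ T) (h : ¬ T ⊆ s.exhausted) :
    ∑ b ∈ T, rate S π s i b = S i s.phase := by
  obtain ⟨a, haT, ha⟩ := not_subset.1 h
  obtain ⟨j, hj⟩ := exists_isFavorite (π := π i) ⟨a, mem_compl.2 ha⟩
  rw [sum_rate_eq hj, if_pos (hT a haT j (hj.2 a ha))]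

lemma State.Valid.exhausted_compl_nonempty (hs : s.Valid n) (hnm : n ≤ m) (hr : s.phase < n) :
    s.exhaustedᶜ.Nonempty := by
  have hpos : 0 < ∑ j, s.supply j := by
    have : (s.phase : ℝ) + 1 ≤ n := by exact_mod_cast hr
    have : (n : ℝ) ≤ m := by exact_mod_cast hnm
    rw [hs.sum_supply]
    linarith [hs.elapsed_lt_one]
  obtain ⟨j, -, hj⟩ := exists_ne_zero_of_sum_ne_zero hpos.ne'
  exact ⟨j, by simpa [State.exhausted] using hj⟩

lemma State.Valid.card_le_phase {s : State m} (hs : s.Valid n) {T : Finset (Fin m)}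
    (hT : T ⊆ s.exhausted) : #T ≤ s.phase := by
  have hzero : ∑ j ∈ T, s.supply j = 0 := sum_eq_zero fun j hj => (mem_filter.1 (hT hj)).2
  have hrest : ∑ j ∈ Tᶜ, s.supply j ≤ #Tᶜ := by
    simpa using sum_le_card_nsmul Tᶜ s.supply 1 fun j _ => hs.supply_le_one j
  have hcard : (#Tᶜ : ℝ) = m - #T := by
    rw [card_compl, Fintype.card_fin, Nat.cast_sub (by simpa using card_le_univ T)]
  have hsum := sum_add_sum_compl T s.supply
  rw [hzero, zero_add, hs.sum_supply] at hsum
  have : (#T : ℝ) < s.phase + 1 := by linarith [hs.elapsed_lt_one]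
  exact_mod_cast Nat.lt_succ_iff.1 (by exact_mod_cast this)

lemma sum_rate_univ (hs : s.Valid n) (hnm : n ≤ m) (hr : s.phase < n) (i : Fin n) :
    ∑ j, rate S π s i j = S i s.phase := by
  obtain ⟨j, hj⟩ := exists_isFavorite (π := π i) (hs.exhausted_compl_nonempty hnm hr)
  rw [sum_rate_eq hj, if_pos (mem_univ j)]

lemma sum_demand (hS : IsSpeedProfile S) (hs : s.Valid n) (hnm : n ≤ m) (hr : s.phase < n) :
    ∑ j, demand S π s j = 1 := by
  simp only [demand]
  rw [sum_comm, sum_congr rfl fun i _ => sum_rate_univ hs hnm hr i, hS.sum_eq_one _ hr]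

lemma stepLength_of_not_lt (h : ¬ s.phase < n) : stepLength S π s = 0 := if_neg h

lemma stepLength_le (hs : s.Valid n) : stepLength S π s ≤ 1 - s.elapsed := by
  unfold stepLength
  split_ifs
  · exact min'_le _ _ (mem_insert_self _ _)
  · linarith [hs.elapsed_lt_one]

lemma stepLength_nonneg (hS : IsSpeedProfile S) (hs : s.Valid n) : 0 ≤ stepLength S π s := by
  unfold stepLength
  split_ifs
  · refine le_min' _ _ _ fun x hx => ?_
    rcases mem_insert.1 hx with rfl | hx
    · linarith [hs.elapsed_lt_one]
    · obtain ⟨j, -, rfl⟩ := mem_image.1 hx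
      exact div_nonneg (hs.supply_nonneg j) (demand_nonneg hS s j)
  · exact le_rfl

lemma stepLength_mul_demand_le (hS : IsSpeedProfile S) (hs : s.Valid n) (j : Fin m) :
    stepLength S π s * demand S π s j ≤ s.supply j := by
  by_cases hr : s.phase < n
  · rcases (demand_nonneg hS s j).eq_or_lt with h | h
    · rw [← h, mul_zero]
      exact hs.supply_nonneg j
    · have hle : stepLength S π s ≤ s.supply j / demand S π s j := by
        rw [stepLength, if_pos hr]
        exact min'_le _ _ (mem_insert_of_mem (mem_image_of_mem _ (by simpa using h)))
      exact (le_div_iff₀ h).1 hle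
  · rw [stepLength_of_not_lt hr, zero_mul]
    exact hs.supply_nonneg j

lemma stepLength_mul_sum_demand (hS : IsSpeedProfile S) (hs : s.Valid n) (hnm : n ≤ m) :
    stepLength S π s * ∑ j, demand S π s j = stepLength S π s := by
  by_cases hr : s.phase < n
  · rw [sum_demand hS hs hnm hr, mul_one]
  · rw [stepLength_of_not_lt hr, zero_mul]

lemma phase_add_elapsed_step (s : State m) :
    ((step S π s).phase : ℝ) + (step S π s).elapsed
      = s.phase + s.elapsed + stepLength S π s := by
  dsimp only [step]
  split_ifs with h
  · push_cast
    linarith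
  · ring

lemma valid_step (hS : IsSpeedProfile S) (hnm : n ≤ m) (hs : s.Valid n) :
    (step S π s).Valid n := by
  have hd0 := stepLength_nonneg (π := π) hS hs
  have hd1 := stepLength_le (S := S) (π := π) hs
  refine ⟨?_, ?_, ?_, fun j => ?_, fun j => ?_, ?_⟩
  · dsimp only [step]
    split_ifs
    exacts [le_rfl, add_nonneg hs.elapsed_nonneg hd0]
  · dsimp only [step]
    split_ifs with h
    · exact one_pos
    · linarith [lt_of_le_of_ne hd1 h]
  · rw [phase_add_elapsed_step]
    by_cases hr : s.phase < n
    · have : (s.phase : ℝ) + 1 ≤ n := by exact_mod_cast hr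
      linarith
    · rw [stepLength_of_not_lt hr, add_zero]
      exact hs.phase_add_elapsed_le
  · exact sub_nonneg.2 (stepLength_mul_demand_le hS hs j)
  · have := mul_nonneg hd0 (demand_nonneg (π := π) hS s j)
    exact (sub_le_self _ this).trans (hs.supply_le_one j)
  · have hsum : ∑ j, (step S π s).supply j
        = ∑ j, s.supply j - stepLength S π s * ∑ j, demand S π s j := by
      rw [mul_sum, ← sum_sub_distrib]
      rfl
    rw [hsum, stepLength_mul_sum_demand hS hs hnm, hs.sum_supply, phase_add_elapsed_step]
    ring

lemma exhausted_subset_step (s : State m) : s.exhausted ⊆ (step S π s).exhausted := by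
  intro j hj
  have hc : s.supply j = 0 := (mem_filter.1 hj).2
  simp only [State.exhausted, mem_filter, mem_univ, true_and]
  change s.supply j - stepLength S π s * demand S π s j = 0
  rw [hc, demand_eq_zero_of_mem_exhausted hj, mul_zero, sub_zero]

lemma exhausted_ssubset_step (hr : s.phase < n)
    (hd : stepLength S π s ≠ 1 - s.elapsed) : s.exhausted ⊂ (step S π s).exhausted := by
  have hmem : stepLength S π s ∈ insert (1 - s.elapsed)
      (({j | 0 < demand S π s j} : Finset (Fin m)).image
        fun j => s.supply j / demand S π s j) := by
    rw [stepLength, if_pos hr]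
    exact min'_mem _ _
  obtain ⟨j, hj, hjd⟩ := mem_image.1 ((mem_insert.1 hmem).resolve_left hd)
  have hpos : 0 < demand S π s j := by simpa using hj
  refine (ssubset_iff_of_subset (exhausted_subset_step s)).2 ⟨j, ?_, ?_⟩
  · have : (step S π s).supply j = 0 := by
      change s.supply j - stepLength S π s * demand S π s j = 0
      rw [← hjd, div_mul_cancel₀ _ hpos.ne', sub_self]
    simp [State.exhausted, this]
  · exact fun hj' => hpos.ne' (demand_eq_zero_of_mem_exhausted hj')

end Step

section Run

variable {S : Fin n → ℕ → ℝ} {π : Fin n → Equiv.Perm (Fin m)}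

lemma valid_run (hS : IsSpeedProfile S) (hnm : n ≤ m) : ∀ k, (run S π k).Valid n
  | 0 => ⟨le_rfl, one_pos, by simp [run], fun _ => zero_le_one, fun _ => le_rfl, by simp [run]⟩
  | k + 1 => valid_step hS hnm (valid_run hS hnm k)

lemma monotone_exhausted_run : Monotone fun k => (run S π k).exhausted :=
  monotone_nat_of_le_succ fun _ => exhausted_subset_step _

lemma monotone_phase_run : Monotone fun k => (run S π k).phase :=
  monotone_nat_of_le_succ fun k => by
    change _ ≤ (step S π (run S π k)).phase
    dsimp only [step]
    split_ifs <;> omega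

def potential (n : ℕ) (s : State m) : ℕ := (n - s.phase) * (m + 1) + (m - #s.exhausted)

lemma potential_step_lt {s : State m} (hr : s.phase < n) :
    potential n (step S π s) < potential n s := by
  have hsub := card_le_card (exhausted_subset_step (S := S) (π := π) s)
  have hle : #(step S π s).exhausted ≤ m := by
    simpa using card_le_card (subset_univ (step S π s).exhausted)
  unfold potential
  by_cases hd : stepLength S π s = 1 - s.elapsed
  · have hr' : (step S π s).phase = s.phase + 1 := if_pos hd
    rw [hr', show n - s.phase = n - (s.phase + 1) + 1 by omega, Nat.succ_mul]
    omega
  · have hr' : (step S π s).phase = s.phase := if_neg hd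
    have hlt := card_lt_card (exhausted_ssubset_step (S := S) (π := π) hr hd)
    rw [hr']
    omega

lemma potential_run_add_le {k : ℕ} (hk : (run S π k).phase < n) :
    potential n (run S π k) + k ≤ n * (m + 1) + m := by
  induction k with
  | zero => simp [potential, run, State.exhausted]
  | succ k ih =>
    have hk' : (run S π k).phase < n := (monotone_phase_run k.le_succ).trans_lt hk
    have := potential_step_lt (S := S) (π := π) hk'
    have := ih hk'
    change potential n (step S π (run S π k)) + (k + 1) ≤ _
    omega

lemma run_numSteps (hS : IsSpeedProfile S) (hnm : n ≤ m) :
    (run S π (numSteps n m)).phase = n ∧ (run S π (numSteps n m)).elapsed = 0 := by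
  have hend : n ≤ (run S π (numSteps n m)).phase := by
    by_contra! hK
    have := potential_run_add_le hK
    rw [numSteps] at this
    omega
  have hK := valid_run (π := π) hS hnm (numSteps n m)
  have hn : (n : ℝ) ≤ (run S π (numSteps n m)).phase := by exact_mod_cast hend
  have hu := hK.elapsed_nonneg
  have := hK.phase_add_elapsed_le
  refine ⟨?_, by linarith⟩
  exact_mod_cast le_antisymm (by linarith) hn

lemma eats_nonneg (hS : IsSpeedProfile S) (hnm : n ≤ m) (k : ℕ) (i : Fin n) (j : Fin m) :
    0 ≤ eats S π k i j :=
  mul_nonneg (stepLength_nonneg hS (valid_run hS hnm k)) (rate_nonneg hS _ i j)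

lemma eaten_eq (i : Fin n) (k : ℕ) :
    eaten S π i k
      = cumSpeed S i (run S π k).phase + (run S π k).elapsed * S i (run S π k).phase := by
  induction k with
  | zero => simp [eaten, cumSpeed, run]
  | succ k ih =>
    rw [eaten, sum_range_succ, ← eaten, ih]
    change _ = cumSpeed S i (step S π (run S π k)).phase
      + (step S π (run S π k)).elapsed * S i (step S π (run S π k)).phase
    dsimp only [step]
    split_ifs with h
    · simp only [cumSpeed, sum_range_succ, h]
      ring
    · ring

lemma supply_run (k : ℕ) (j : Fin m) :
    (run S π k).supply j = 1 - ∑ l ∈ range k, ∑ i, eats S π l i j := by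
  induction k with
  | zero => simp [run]
  | succ k ih =>
    rw [sum_range_succ, ← sub_sub, ← ih]
    simp only [eats, ← mul_sum]
    rfl

lemma sum_assignment_agents (j : Fin m) :
    ∑ i, assignment S π i j = 1 - (run S π (numSteps n m)).supply j := by
  simp only [assignment]
  rw [sum_comm, supply_run]
  ring

lemma sum_assignment_items (hS : IsSpeedProfile S) (hnm : n ≤ m) (i : Fin n) :
    ∑ j, assignment S π i j = cumSpeed S i n := by
  have hstep : ∀ k,
      ∑ j, eats S π k i j = stepLength S π (run S π k) * S i (run S π k).phase := by
    intro k
    by_cases hr : (run S π k).phase < n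
    · simp only [eats, ← mul_sum, sum_rate_univ (valid_run hS hnm k) hnm hr]
    · simp [eats, stepLength_of_not_lt hr]
  simp only [assignment]
  rw [sum_comm, sum_congr rfl fun k _ => hstep k, ← eaten, eaten_eq, (run_numSteps hS hnm).1,
    (run_numSteps hS hnm).2, zero_mul, add_zero]

end Run

section Properties

variable {S : Fin n → ℕ → ℝ} {π : Fin n → Equiv.Perm (Fin m)}

lemma isRandomAssignment_assignment (hS : IsSpeedProfile S) (hnm : n ≤ m)
    (hrow : ∀ i, cumSpeed S i n = 1) : IsRandomAssignment (assignment S π) := by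
  refine ⟨fun i j => sum_nonneg fun k _ => eats_nonneg hS hnm k i j,
    fun i => (sum_assignment_items hS hnm i).trans (hrow i), fun j => ?_⟩
  rw [sum_assignment_agents]
  linarith [(valid_run (π := π) hS hnm (numSteps n m)).supply_nonneg j]

/-- As the exhausted sets grow, this is the first step at which `j` is exhausted
(`numSteps n m` if there is none). -/
def exhaustionTime (S : Fin n → ℕ → ℝ) (π : Fin n → Equiv.Perm (Fin m))
    (j : Fin m) : ℕ :=
  #{k ∈ range (numSteps n m) | j ∉ (run S π k).exhausted}

lemma exhaustionTime_lt {k : ℕ} (hk : k < numSteps n m) {a b : Fin m}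
    (ha : a ∈ (run S π k).exhausted) (hb : b ∉ (run S π k).exhausted) :
    exhaustionTime S π a < exhaustionTime S π b := by
  refine card_lt_card ((ssubset_iff_of_subset fun l hl => ?_).2 ⟨k, ?_, ?_⟩)
  · simp only [mem_filter, mem_range] at hl ⊢
    refine ⟨hl.1, fun hbl => ?_⟩
    have hlk : l < k := lt_of_not_ge fun hkl => hl.2 (monotone_exhausted_run hkl ha)
    exact hb (monotone_exhausted_run hlk.le hbl)
  · simp [hk, hb]
  · simp [ha]

lemma exists_isFavorite_of_assignment_pos {i : Fin n} {b : Fin m} (h : 0 < assignment S π i b) :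
    ∃ k < numSteps n m, IsFavorite (π i) (run S π k).exhausted b := by
  obtain ⟨k, hk, hne⟩ := exists_ne_zero_of_sum_ne_zero h.ne'
  refine ⟨k, mem_range.1 hk, by_contra fun hb => hne ?_⟩
  simp [eats, rate, hb]

lemma oe_assignment (hS : IsSpeedProfile S) (hnm : n ≤ m) (hrow : ∀ i, cumSpeed S i n = 1) :
    OE π (assignment S π) := by
  refine oe_of_exhaustion_order (isRandomAssignment_assignment hS hnm hrow) (exhaustionTime S π)
    fun i a b hb hab => ?_
  obtain ⟨k, hk, hfav⟩ := exists_isFavorite_of_assignment_pos hb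
  have ha : a ∈ (run S π k).exhausted := by
    by_contra ha
    exact (hfav.2 a ha).not_gt hab
  have haK : (run S π (numSteps n m)).supply a = 0 :=
    (mem_filter.1 (monotone_exhausted_run hk.le ha)).2
  exact ⟨by rw [sum_assignment_agents, haK, sub_zero], exhaustionTime_lt hk ha hfav.1⟩

end Properties

section TopSets

variable {S : Fin n → ℕ → ℝ} {π : Fin n → Equiv.Perm (Fin m)} {i : Fin n}
  {T : Finset (Fin m)}

/-- Until all of a top set `T` of agent `i` is exhausted, `i` eats inside `T` and nobody eats
faster than their speed; afterwards nobody eats inside `T`. -/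
lemma exists_sum_assignment_topSet (hS : IsSpeedProfile S) (hnm : n ≤ m)
    (hT : ∀ a ∈ T, ∀ b, π i b ≤ π i a → b ∈ T) :
    ∃ k, (T ⊆ (run S π k).exhausted ∨ k = numSteps n m) ∧
      ∑ b ∈ T, assignment S π i b = eaten S π i k ∧
      ∀ j, ∑ b ∈ T, assignment S π j b ≤ eaten S π j k := by
  obtain ⟨k, hk, hfilter⟩ := exists_filter_range_eq_range
    (p := fun l => T ⊆ (run S π l).exhausted)
    (fun _ _ hkl h => h.trans (monotone_exhausted_run hkl)) (numSteps n m)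
  have hswap : ∀ j, ∑ b ∈ T, assignment S π j b
      = ∑ l ∈ range (numSteps n m),
          stepLength S π (run S π l) * ∑ b ∈ T, rate S π (run S π l) j b := by
    intro j
    simp only [assignment, eats, mul_sum]
    exact sum_comm
  have heaten : ∀ j, eaten S π j k = ∑ l ∈ range (numSteps n m),
      if ¬ T ⊆ (run S π l).exhausted then stepLength S π (run S π l) * S j (run S π l).phase
      else 0 := by
    intro j
    rw [← sum_filter, hfilter, eaten]
  refine ⟨k, hk, ?_, fun j => ?_⟩
  · rw [hswap, heaten]
    refine sum_congr rfl fun l _ => ?_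
    split_ifs with h
    · rw [sum_rate_of_subset_exhausted h, mul_zero]
    · rw [sum_rate_of_not_subset_exhausted hT h]
  · rw [hswap, heaten]
    refine sum_le_sum fun l _ => ?_
    split_ifs with h
    · rw [sum_rate_of_subset_exhausted h, mul_zero]
    · exact mul_le_mul_of_nonneg_left (sum_rate_le hS j T)
        (stepLength_nonneg hS (valid_run hS hnm l))

lemma eaten_le_eaten (hS : IsSpeedProfile S) (hnm : n ≤ m) {j : Fin n}
    (hcum : ∀ l, cumSpeed S j l ≤ cumSpeed S i l) (k : ℕ) :
    eaten S π j k ≤ eaten S π i k := by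
  have hs := valid_run (π := π) hS hnm k
  have hinterp : ∀ x, eaten S π x k
      = (1 - (run S π k).elapsed) * cumSpeed S x (run S π k).phase
        + (run S π k).elapsed * cumSpeed S x ((run S π k).phase + 1) := by
    intro x
    rw [eaten_eq, cumSpeed, cumSpeed, sum_range_succ]
    ring
  rw [hinterp, hinterp]
  gcongr
  · linarith [hs.elapsed_lt_one]
  · exact hcum _
  · exact hs.elapsed_nonneg
  · exact hcum _

lemma sum_topSet_le_sum_topSet (hS : IsSpeedProfile S) (hnm : n ≤ m)
    (hT : ∀ a ∈ T, ∀ b, π i b ≤ π i a → b ∈ T) {j : Fin n}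
    (hcum : ∀ l, cumSpeed S j l ≤ cumSpeed S i l) :
    ∑ b ∈ T, assignment S π j b ≤ ∑ b ∈ T, assignment S π i b := by
  obtain ⟨k, -, hi, hj⟩ := exists_sum_assignment_topSet hS hnm hT
  rw [hi]
  exact (hj j).trans (eaten_le_eaten hS hnm hcum k)

/-- Exhausting the `#T` items of `T` takes time at least `#T`. -/
lemma cumSpeed_card_le_sum_topSet (hS : IsSpeedProfile S) (hnm : n ≤ m)
    (hT : ∀ a ∈ T, ∀ b, π i b ≤ π i a → b ∈ T) (hvan : ∀ r, n ≤ r → S i r = 0) :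
    cumSpeed S i #T ≤ ∑ b ∈ T, assignment S π i b := by
  obtain ⟨k, hk, hi, -⟩ := exists_sum_assignment_topSet hS hnm hT
  have hs := valid_run (π := π) hS hnm k
  have hcum : cumSpeed S i #T ≤ cumSpeed S i (run S π k).phase := by
    rcases hk with hsub | rfl
    · exact cumSpeed_mono (hS.nonneg i) (hs.card_le_phase hsub)
    · rw [(run_numSteps hS hnm).1, cumSpeed_eq_min hvan]
      exact cumSpeed_mono (hS.nonneg i) (min_le_right _ _)
  rw [hi, eaten_eq]
  linarith [mul_nonneg hs.elapsed_nonneg (hS.nonneg i (run S π k).phase)]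

end TopSets

section Dominance

variable {S : Fin n → ℕ → ℝ} {π : Fin n → Equiv.Perm (Fin m)} {i : Fin n}

lemma sd_assignment_of_cumSpeed_le (hS : IsSpeedProfile S) (hnm : n ≤ m) {j : Fin n}
    (hcum : ∀ l, cumSpeed S j l ≤ cumSpeed S i l) :
    SD (π i) (assignment S π i) (assignment S π j) :=
  sd_iff_topItems.2 fun _ =>
    sum_topSet_le_sum_topSet hS hnm (fun _ ha _ hb => mem_topItems_of_le ha hb) hcum

lemma sd_assignment_speed (hS : IsSpeedProfile S) (hnm : n ≤ m)
    (hvan : ∀ r, n ≤ r → S i r = 0) :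
    SD (π i) (assignment S π i) fun b => S i (π i b) := by
  intro t
  simp only [Equiv.apply_symm_apply]
  rw [sum_Iic_val_eq_sum_range (S i), sum_Iic_symm, ← card_topItems (π := π i)]
  exact cumSpeed_card_le_sum_topSet hS hnm (fun _ ha _ hb => mem_topItems_of_le ha hb) hvan

end Dominance

section RankSpeeds

/-- `Pr[σ i = r]`, with `r : ℕ` so that it is a speed profile. -/
def rankProb (ρ : Equiv.Perm (Fin n) → ℝ) (i : Fin n) (r : ℕ) : ℝ :=
  ∑ σ with (σ i : ℕ) = r, ρ σ

variable {ρ : Equiv.Perm (Fin n) → ℝ}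

lemma rankProb_eq_zero {i : Fin n} {r : ℕ} (hr : n ≤ r) : rankProb ρ i r = 0 :=
  sum_eq_zero fun σ hσ => absurd (mem_filter.1 hσ).2 (by have := (σ i).isLt; omega)

lemma isSpeedProfile_rankProb (hρ : IsRandomPriority ρ) : IsSpeedProfile (rankProb ρ) := by
  refine ⟨fun i r => sum_nonneg fun σ _ => hρ.1 σ, fun r hr => ?_⟩
  simp only [rankProb, sum_filter]
  rw [sum_comm, ← hρ.2]
  refine sum_congr rfl fun σ _ => ?_
  have hiff : ∀ i, (σ i : ℕ) = r ↔ i = σ.symm ⟨r, hr⟩ := fun i => by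
    rw [Equiv.eq_symm_apply, Fin.ext_iff]
  simp only [hiff, sum_ite_eq', mem_univ, if_true]

lemma cumSpeed_rankProb_self (hρ : IsRandomPriority ρ) (i : Fin n) :
    cumSpeed (rankProb ρ) i n = 1 := by
  simp only [cumSpeed, rankProb, sum_filter]
  rw [sum_comm, ← hρ.2]
  exact sum_congr rfl fun σ _ => by simp [sum_ite_eq]

lemma sum_Iic_rankDist (i : Fin n) (t : Fin n) :
    ∑ r ∈ Iic t, rankDist ρ i r = cumSpeed (rankProb ρ) i (t + 1) := by
  rw [cumSpeed, ← sum_Iic_val_eq_sum_range]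
  refine sum_congr rfl fun r _ => ?_
  simp only [rankDist, rankProb, Fin.val_inj]

lemma cumSpeed_rankProb_le {i j : Fin n}
    (hyp : ∀ t : Fin n, ∑ r ∈ Iic t, rankDist ρ j r ≤ ∑ r ∈ Iic t, rankDist ρ i r)
    (l : ℕ) : cumSpeed (rankProb ρ) j l ≤ cumSpeed (rankProb ρ) i l := by
  rw [cumSpeed_eq_min (i := j) (fun _ => rankProb_eq_zero),
    cumSpeed_eq_min (i := i) (fun _ => rankProb_eq_zero)]
  rcases Nat.eq_zero_or_pos (min l n) with h | h
  · simp [h, cumSpeed]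
  · have ht : min l n = ((⟨min l n - 1, by omega⟩ : Fin n) : ℕ) + 1 := by
      simp only
      omega
    rw [ht, ← sum_Iic_rankDist, ← sum_Iic_rankDist]
    exact hyp _

end RankSpeeds

end

end UnitTimeEating

open UnitTimeEating

/-- **Theorem (Unit-Time Eating).** For every instance of the assignment problem with
uncertain priorities, there exists a random assignment satisfying OE, SEF and PROP. -/
theorem exists_OE_SEF_PROP (n m : ℕ) (hm : n ≤ m)
    (π : Fin n → Equiv.Perm (Fin m)) (ρ : Equiv.Perm (Fin n) → ℝ)
    (hρ : IsRandomPriority ρ) :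
    ∃ P : Fin n → Fin m → ℝ,
      IsRandomAssignment P ∧ OE π P ∧ SEF π ρ P ∧ PROP π ρ P := by
  have hS := isSpeedProfile_rankProb hρ
  have hrow := cumSpeed_rankProb_self hρ
  exact ⟨assignment (rankProb ρ) π, isRandomAssignment_assignment hS hm hrow,
    oe_assignment hS hm hrow,
    fun _ _ hdom => sd_assignment_of_cumSpeed_le hS hm (cumSpeed_rankProb_le hdom),
    fun _ => sd_assignment_speed hS hm fun _ => rankProb_eq_zero⟩
end

section
/- Ordinal efficiency and likelihood envy-freeness are incompatible: there exists an instance of the assignment problem with uncertain priorities (a number of agents, items, strict agent preferences, and a finitely supported random priority Σ) such that no random assignment satisfies both OE and LEF. -/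
open Finset

/-!
Four agents, four items. Agents `0, 1` rank the items `0 ≻ 1 ≻ 2 ≻ 3`, agents `2, 3` rank
`1 ≻ 0 ≻ 2 ≻ 3`, and the priority order is `0, 1, 2, 3` or `2, 3, 0, 1`, each with probability
`1/2`. Summing the LEF inequalities over the five pairs `(0,1), (1,2), (1,3), (2,3), (3,1)` gives
`7/2` on the priority side, while every deterministic assignment satisfies at most three of the
five corresponding no-envy events unless agent `0` or `1` receives item `1`. Taking expectations,
agents `0, 1` hold item `1` with total probability at least `1/2`; the pairs
`(0,1), (1,3), (2,3), (3,0), (3,1)` show in the same way that agents `2, 3` hold item `0` with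
total probability at least `1/2`. So some `i ∈ {0, 1}` holds item `1` and some `k ∈ {2, 3}` holds
item `0` with positive probability, and exchanging a little of these items makes both of them
better off in the stochastic-dominance sense, contradicting ordinal efficiency.
-/

section Trade

variable {n m : ℕ}

lemma sum_Iic_single_sub_single_nonneg (π : Equiv.Perm (Fin m)) {a b : Fin m}
    (hab : π a < π b) (t : Fin m) :
    0 ≤ ∑ r ∈ Iic t, (Pi.single a 1 - Pi.single b 1 : Fin m → ℝ) (π.symm r) := by
  have hsingle : ∀ c : Fin m,
      ∑ r ∈ Iic t, (Pi.single c 1 : Fin m → ℝ) (π.symm r) = if π c ≤ t then 1 else 0 := by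
    intro c
    simp_rw [Pi.single_apply, π.symm_apply_eq, sum_ite_eq', mem_Iic]
  simp only [Pi.sub_apply, sum_sub_distrib, hsingle]
  by_cases hb : π b ≤ t
  · simp [hab.le.trans hb, hb]
  · simp only [hb, if_false, sub_zero]
    split_ifs <;> norm_num

lemma SD_add_smul {π : Equiv.Perm (Fin m)} (X D : Fin m → ℝ) {c : ℝ} (hc : 0 ≤ c)
    (hD : ∀ t, 0 ≤ ∑ r ∈ Iic t, D (π.symm r)) : SD π (X + c • D) X := by
  intro t
  simp only [Pi.add_apply, Pi.smul_apply, smul_eq_mul, sum_add_distrib, ← mul_sum]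
  linarith [mul_nonneg hc (hD t)]

/-- Agent `i` hands `ε` of item `b` to agent `k` in exchange for `ε` of item `a`. -/
def trade (P : Fin n → Fin m → ℝ) (i k : Fin n) (a b : Fin m) (ε : ℝ) :
    Fin n → Fin m → ℝ :=
  fun x => P x + (ε * (Pi.single i 1 - Pi.single k 1 : Fin n → ℝ) x) •
    (Pi.single a 1 - Pi.single b 1 : Fin m → ℝ)

lemma isRandomAssignment_trade {P : Fin n → Fin m → ℝ} (hP : IsRandomAssignment P)
    {i k : Fin n} {a b : Fin m} (hik : i ≠ k) (hab : a ≠ b) {ε : ℝ} (hε : 0 ≤ ε)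
    (hib : ε ≤ P i b) (hka : ε ≤ P k a) : IsRandomAssignment (trade P i k a b ε) := by
  obtain ⟨hnonneg, hrow, hcol⟩ := hP
  refine ⟨fun x y => ?_, fun x => ?_, fun y => ?_⟩
  · simp only [trade, Pi.add_apply, Pi.smul_apply, Pi.sub_apply, Pi.single_apply, smul_eq_mul]
    have := hnonneg x y
    -- only the entries `(i, b)` and `(k, a)` decrease, by `ε`
    split_ifs <;> subst_vars <;> norm_num at * <;> linarith
  · simp [trade, sum_add_distrib, ← mul_sum, hrow]
  · have hu : ∑ x, (Pi.single i 1 - Pi.single k 1 : Fin n → ℝ) x = 0 := by simp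
    simpa only [trade, Pi.add_apply, Pi.smul_apply, smul_eq_mul, sum_add_distrib, ← sum_mul,
      ← mul_sum, hu, mul_zero, zero_mul, add_zero] using hcol y

lemma trade_ne {P : Fin n → Fin m → ℝ} {i k : Fin n} {a b : Fin m} (hik : i ≠ k)
    (hab : a ≠ b) {ε : ℝ} (hε : ε ≠ 0) : trade P i k a b ε ≠ P := by
  intro h
  have := congrFun (congrFun h i) a
  simp [trade, hik, hab, hε] at this

lemma SD_trade {π : Fin n → Equiv.Perm (Fin m)} (P : Fin n → Fin m → ℝ) {i k : Fin n}
    {a b : Fin m} (hik : i ≠ k) (hi : π i a < π i b) (hk : π k b < π k a) {ε : ℝ}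
    (hε : 0 ≤ ε) (x : Fin n) : SD (π x) (trade P i k a b ε x) (P x) := by
  by_cases hxi : x = i
  · subst hxi
    simpa [trade, hik] using SD_add_smul (P x) _ hε (sum_Iic_single_sub_single_nonneg _ hi)
  by_cases hxk : x = k
  · subst hxk
    have hswap : trade P i x a b ε x = P x + ε • (Pi.single b 1 - Pi.single a 1) := by
      ext y
      simp [trade, hxi]
      ring
    rw [hswap]
    exact SD_add_smul (P x) _ hε (sum_Iic_single_sub_single_nonneg _ hk)
  · simp [SD, trade, Pi.single_eq_of_ne hxi, Pi.single_eq_of_ne hxk]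

theorem not_OE_of_trade {π : Fin n → Equiv.Perm (Fin m)} {P : Fin n → Fin m → ℝ}
    (hP : IsRandomAssignment P) {i k : Fin n} {a b : Fin m} (hik : i ≠ k)
    (hi : π i a < π i b) (hk : π k b < π k a) (hib : 0 < P i b) (hka : 0 < P k a) :
    ¬ OE π P := by
  have hab : a ≠ b := fun h => (h ▸ hi).false
  set ε := min (P i b) (P k a)
  have hε : 0 < ε := lt_min hib hka
  exact fun hOE => hOE ⟨trade P i k a b ε,
    isRandomAssignment_trade hP hik hab hε.le (min_le_left _ _) (min_le_right _ _),
    trade_ne hik hab hε.ne', SD_trade P hik hi hk hε.le⟩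

end Trade

lemma exists_pos_of_sum_pos {ι : Type*} {s : Finset ι} {g : ι → ℝ} (h : 0 < ∑ x ∈ s, g x) :
    ∃ x ∈ s, 0 < g x :=
  exists_lt_of_sum_lt (f := fun _ => 0) (by rwa [sum_const_zero])

section Counting

variable {n m : ℕ}

lemma sum_sum_filter_eq_sum_mul_card {α ι : Type*} [Fintype α] (s : Finset ι)
    (c : ι → α → Prop) [∀ k x, Decidable (c k x)] (w : α → ℝ) :
    ∑ k ∈ s, ∑ x ∈ univ.filter (c k), w x = ∑ x, w x * #{k ∈ s | c k x} := by
  simp_rw [sum_filter, natCast_card_filter, mul_sum, mul_ite, mul_one, mul_zero]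
  exact sum_comm

lemma IsLottery.sum_mul_le_sum_mul {L : (Fin n → Fin m) → ℝ} (hL : IsLottery L)
    {g h : (Fin n → Fin m) → ℝ} (hgh : ∀ f, Function.Injective f → g f ≤ h f) :
    ∑ f, L f * g f ≤ ∑ f, L f * h f :=
  sum_le_sum fun f _ => by
    by_cases hf : L f = 0
    · simp [hf]
    · exact mul_le_mul_of_nonneg_left (hgh f (hL.2.2 f hf)) (hL.1 f)

lemma sum_prHigher_eq (ρ : Equiv.Perm (Fin n) → ℝ) (s : Finset (Fin n × Fin n)) :
    ∑ p ∈ s, prHigher ρ p.1 p.2 = ∑ σ, ρ σ * #{p ∈ s | σ p.1 < σ p.2} :=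
  sum_sum_filter_eq_sum_mul_card s (fun p (σ : Equiv.Perm (Fin n)) => σ p.1 < σ p.2) ρ

lemma sum_prHigher_single_add_single (σ τ : Equiv.Perm (Fin n)) {s : Finset (Fin n × Fin n)}
    {c : ℕ} (hc : #{p ∈ s | σ p.1 < σ p.2} + #{p ∈ s | τ p.1 < τ p.2} = c) :
    ∑ p ∈ s, prHigher (Pi.single σ (1 / 2) + Pi.single τ (1 / 2)) p.1 p.2 = c / 2 := by
  simp only [sum_prHigher_eq, Pi.add_apply, add_mul, sum_add_distrib, Pi.single_apply, ite_mul,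
    zero_mul, sum_ite_eq', mem_univ, if_true, ← hc]
  push_cast
  ring

lemma sum_prPrefers_eq (π : Fin n → Equiv.Perm (Fin m)) (L : (Fin n → Fin m) → ℝ)
    (s : Finset (Fin n × Fin n)) :
    ∑ p ∈ s, prPrefers π L p.1 p.2 = ∑ f, L f * #{p ∈ s | π p.1 (f p.1) < π p.1 (f p.2)} :=
  sum_sum_filter_eq_sum_mul_card s (fun p (f : Fin n → Fin m) => π p.1 (f p.1) < π p.1 (f p.2)) L

lemma sum_induced_eq (L : (Fin n → Fin m) → ℝ) (A : Finset (Fin n)) (j : Fin m) :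
    ∑ x ∈ A, induced L x j = ∑ f, L f * #{x ∈ A | f x = j} :=
  sum_sum_filter_eq_sum_mul_card A (fun x (f : Fin n → Fin m) => f x = j) L

theorem sum_prHigher_le_of_LEF {π : Fin n → Equiv.Perm (Fin m)} {ρ : Equiv.Perm (Fin n) → ℝ}
    {P : Fin n → Fin m → ℝ} (hLEF : LEF π ρ P) (s : Finset (Fin n × Fin n))
    (A : Finset (Fin n)) (j : Fin m) (K : ℕ)
    (hcount : ∀ f : Fin n → Fin m, Function.Injective f →
      #{p ∈ s | π p.1 (f p.1) < π p.1 (f p.2)} ≤ K + #{x ∈ A | f x = j}) :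
    ∑ p ∈ s, prHigher ρ p.1 p.2 ≤ K + ∑ x ∈ A, P x j := by
  obtain ⟨L, hL, rfl, hprob⟩ := hLEF
  calc ∑ p ∈ s, prHigher ρ p.1 p.2
      ≤ ∑ p ∈ s, prPrefers π L p.1 p.2 := sum_le_sum fun p _ => hprob p.1 p.2
    _ = ∑ f, L f * #{p ∈ s | π p.1 (f p.1) < π p.1 (f p.2)} := sum_prPrefers_eq π L s
    _ ≤ ∑ f, L f * (K + #{x ∈ A | f x = j} : ℕ) :=
      hL.sum_mul_le_sum_mul fun f hf => by exact_mod_cast hcount f hf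
    _ = K + ∑ x ∈ A, induced L x j := by
      rw [sum_induced_eq]
      simp only [Nat.cast_add, mul_add, sum_add_distrib, ← sum_mul, hL.2.1, one_mul]

end Counting

def counterPrefs : Fin 4 → Equiv.Perm (Fin 4) := ![1, 1, Equiv.swap 0 1, Equiv.swap 0 1]

def swapPairs : Equiv.Perm (Fin 4) := Equiv.swap 0 2 * Equiv.swap 1 3

noncomputable def counterPriority : Equiv.Perm (Fin 4) → ℝ :=
  Pi.single 1 (1 / 2) + Pi.single swapPairs (1 / 2)

lemma isRandomPriority_counterPriority : IsRandomPriority counterPriority := by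
  refine ⟨fun σ => ?_, ?_⟩
  · simp only [counterPriority, Pi.add_apply, Pi.single_apply]
    split_ifs <;> norm_num
  · norm_num [counterPriority, sum_add_distrib]

set_option maxRecDepth 10000 in
lemma half_le_sum_of_LEF_counter_left {P : Fin 4 → Fin 4 → ℝ}
    (hLEF : LEF counterPrefs counterPriority P) : 1 / 2 ≤ ∑ x ∈ {0, 1}, P x 1 := by
  have h := sum_prHigher_le_of_LEF hLEF {(0, 1), (1, 2), (1, 3), (2, 3), (3, 1)} {0, 1} 1 3
    (by decide)
  rw [counterPriority, sum_prHigher_single_add_single (c := 7)] at h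
  · linarith
  · decide

set_option maxRecDepth 10000 in
lemma half_le_sum_of_LEF_counter_right {P : Fin 4 → Fin 4 → ℝ}
    (hLEF : LEF counterPrefs counterPriority P) : 1 / 2 ≤ ∑ x ∈ {2, 3}, P x 0 := by
  have h := sum_prHigher_le_of_LEF hLEF {(0, 1), (1, 3), (2, 3), (3, 0), (3, 1)} {2, 3} 0 3
    (by decide)
  rw [counterPriority, sum_prHigher_single_add_single (c := 7)] at h
  · linarith
  · decide

lemma counterPrefs_trade : ∀ i ∈ ({0, 1} : Finset (Fin 4)), ∀ k ∈ ({2, 3} : Finset (Fin 4)),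
    i ≠ k ∧ counterPrefs i 0 < counterPrefs i 1 ∧ counterPrefs k 1 < counterPrefs k 0 := by
  decide

/-- **Theorem.** OE and LEF are incompatible: there is an instance such that no random
assignment satisfies both. -/
theorem OE_LEF_incompatible :
    ∃ (n m : ℕ), n ≤ m ∧
      ∃ (π : Fin n → Equiv.Perm (Fin m)) (ρ : Equiv.Perm (Fin n) → ℝ),
        IsRandomPriority ρ ∧
        ∀ P : Fin n → Fin m → ℝ, IsRandomAssignment P → ¬ (OE π P ∧ LEF π ρ P) := by
  refine ⟨4, 4, le_rfl, counterPrefs, counterPriority, isRandomPriority_counterPriority, ?_⟩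
  rintro P hP ⟨hOE, hLEF⟩
  obtain ⟨i, hi, hib⟩ :=
    exists_pos_of_sum_pos (by linarith [half_le_sum_of_LEF_counter_left hLEF])
  obtain ⟨k, hk, hka⟩ :=
    exists_pos_of_sum_pos (by linarith [half_le_sum_of_LEF_counter_right hLEF])
  obtain ⟨hik, hpi, hpk⟩ := counterPrefs_trade i hi k hk
  exact not_OE_of_trade hP hik hpi hpk hib hka hOE
end

section
/- Stochastic envy-freeness and likelihood envy-freeness are incompatible: there exists an instance of the assignment problem with uncertain priorities (a number of agents, items, strict agent preferences, and a finitely supported random priority Σ) such that no random assignment satisfies both SEF and LEF. -/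
/-
Three agents, three items. Agents 0 and 1 rank the items 0 ≻ 1 ≻ 2, agent 2 ranks them
0 ≻ 2 ≻ 1; the priority is `(0, 2, 1)` or `(2, 1, 0)` (ranks of agents 0, 1, 2), each with
probability 1/2. Agent 0's rank distribution dominates agent 1's, so SEF forces agent 0 to
get one of the items 0, 1 at least as often as agent 1 does. LEF forces agent 2 to prefer
her item to agent 1's surely, and agent 0 (resp. 1) to prefer her item to agent 2's
(resp. 0's) with probability at least 1/2. The only permutations left are `(0,1,2)`,
`(1,2,0)` and `(2,1,0)`, and the two LEF bounds force the lottery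
`½ (0,1,2) + ½ (2,1,0)`, in which agent 1 always gets item 1 while agent 0 gets item 0 or 1
only half the time.
-/

open Finset

section Lottery

variable {n m : ℕ} {L : (Fin n → Fin m) → ℝ}

lemma IsLottery.forall_of_one_le_sum_filter (hL : IsLottery L) {E : (Fin n → Fin m) → Prop}
    [DecidablePred E] (hE : 1 ≤ ∑ f ∈ univ.filter E, L f) {f : Fin n → Fin m} (hf : L f ≠ 0) :
    E f := by
  by_contra hnE
  have hnot : ∑ g ∈ univ.filter (fun g => ¬ E g), L g = 0 := by
    have := sum_filter_add_sum_filter_not univ E L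
    have := sum_nonneg fun g (_ : g ∈ univ.filter (fun g => ¬ E g)) => hL.1 g
    linarith [hL.2.1]
  exact hf <| (sum_eq_zero_iff_of_nonneg fun g _ => hL.1 g).1 hnot f (by simpa using hnE)

lemma IsLottery.sum_mul_le (hL : IsLottery L) {g : (Fin n → Fin m) → ℝ} {c : ℝ}
    (hg : ∀ f, L f ≠ 0 → g f ≤ c) : ∑ f, L f * g f ≤ c := by
  calc ∑ f, L f * g f ≤ ∑ f, L f * c := by
        refine sum_le_sum fun f _ => ?_
        by_cases hf : L f = 0
        · simp [hf]
        · exact mul_le_mul_of_nonneg_left (hg f hf) (hL.1 f)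
    _ = c := by rw [← sum_mul, hL.2.1, one_mul]

end Lottery

lemma sum_Iic_rankDist {n : ℕ} (ρ : Equiv.Perm (Fin n) → ℝ) (i t : Fin n) :
    ∑ r ∈ Iic t, rankDist ρ i r = ∑ σ ∈ univ.filter (fun σ => σ i ≤ t), ρ σ := by
  simp only [rankDist, sum_filter]
  rw [sum_comm]
  refine sum_congr rfl fun σ _ => ?_
  simp only [sum_ite_eq, mem_Iic]

noncomputable def examplePriority (σ : Equiv.Perm (Fin 3)) : ℝ :=
  (if σ = Equiv.swap 1 2 then 1 / 2 else 0) + (if σ = Equiv.swap 0 2 then 1 / 2 else 0)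

def examplePref : Fin 3 → Equiv.Perm (Fin 3) := ![1, 1, Equiv.swap 1 2]

lemma sum_filter_examplePriority (p : Equiv.Perm (Fin 3) → Prop) [DecidablePred p] :
    ∑ σ ∈ univ.filter p, examplePriority σ =
      (if p (Equiv.swap 1 2) then 1 / 2 else 0) + (if p (Equiv.swap 0 2) then 1 / 2 else 0) := by
  simp [examplePriority, sum_add_distrib]

lemma isRandomPriority_examplePriority : IsRandomPriority examplePriority := by
  refine ⟨fun σ => by unfold examplePriority; positivity, ?_⟩
  have h := sum_filter_examplePriority fun _ => True
  norm_num at h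
  exact h

lemma rankDist_examplePriority_one_le_zero (t : Fin 3) :
    ∑ r ∈ Iic t, rankDist examplePriority 1 r ≤ ∑ r ∈ Iic t, rankDist examplePriority 0 r := by
  simp only [sum_Iic_rankDist, sum_filter_examplePriority]
  fin_cases t <;> norm_num +decide

lemma sum_top_two_le_of_SEF {P : Fin 3 → Fin 3 → ℝ} (h : SEF examplePref examplePriority P) :
    P 1 0 + P 1 1 ≤ P 0 0 + P 0 1 := by
  have := h 0 1 rankDist_examplePriority_one_le_zero 1
  simpa [examplePref, show Iic (1 : Fin 3) = {0, 1} by decide, sum_pair,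
    Equiv.Perm.one_def] using this

lemma prHigher_examplePriority_zero_two : prHigher examplePriority 0 2 = 1 / 2 := by
  simp +decide [prHigher, sum_filter_examplePriority]

lemma prHigher_examplePriority_one_zero : prHigher examplePriority 1 0 = 1 / 2 := by
  simp +decide [prHigher, sum_filter_examplePriority]

lemma prHigher_examplePriority_two_one : prHigher examplePriority 2 1 = 1 := by
  norm_num +decide [prHigher, sum_filter_examplePriority]

/-- On the three injective `f` with `f 2 ≻₂ f 1`, namely `(0,1,2)`, `(1,2,0)` and `(2,1,0)`,
this takes the value `1`; its expectation under an LEF lottery is at least `3/2`. -/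
def exampleCertificate (f : Fin 3 → Fin 3) : ℤ :=
  (if examplePref 0 (f 0) < examplePref 0 (f 2) then 1 else 0)
    + 2 * (if examplePref 1 (f 1) < examplePref 1 (f 0) then 1 else 0)
    + (if f 0 = 0 then 1 else 0) + (if f 0 = 1 then 1 else 0)
    - (if f 1 = 0 then 1 else 0) - (if f 1 = 1 then 1 else 0)

lemma exampleCertificate_le_one :
    ∀ f : Fin 3 → Fin 3, Function.Injective f →
      examplePref 2 (f 2) < examplePref 2 (f 1) → exampleCertificate f ≤ 1 := by
  decide

lemma sum_mul_exampleCertificate (L : (Fin 3 → Fin 3) → ℝ) :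
    ∑ f, L f * (exampleCertificate f : ℝ) =
      prPrefers examplePref L 0 2 + 2 * prPrefers examplePref L 1 0
        + induced L 0 0 + induced L 0 1 - induced L 1 0 - induced L 1 1 := by
  simp only [prPrefers, induced, sum_filter, mul_sum, ← sum_add_distrib, ← sum_sub_distrib]
  refine sum_congr rfl fun f _ => ?_
  simp only [exampleCertificate]
  push_cast
  split_ifs <;> ring

/-- **Theorem.** SEF and LEF are incompatible: there is an instance such that no random
assignment satisfies both. -/
theorem SEF_LEF_incompatible :
    ∃ (n m : ℕ), n ≤ m ∧
      ∃ (π : Fin n → Equiv.Perm (Fin m)) (ρ : Equiv.Perm (Fin n) → ℝ),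
        IsRandomPriority ρ ∧
        ∀ P : Fin n → Fin m → ℝ, IsRandomAssignment P → ¬ (SEF π ρ P ∧ LEF π ρ P) := by
  refine ⟨3, 3, le_rfl, examplePref, examplePriority, isRandomPriority_examplePriority, ?_⟩
  rintro P - ⟨hSEF, L, hL, rfl, hLEF⟩
  have hSD := sum_top_two_le_of_SEF hSEF
  have h02 := prHigher_examplePriority_zero_two ▸ hLEF 0 2
  have h10 := prHigher_examplePriority_one_zero ▸ hLEF 1 0
  have h21 : ∀ f, L f ≠ 0 → examplePref 2 (f 2) < examplePref 2 (f 1) := fun f =>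
    hL.forall_of_one_le_sum_filter (prHigher_examplePriority_two_one ▸ hLEF 2 1)
  have hcert : ∑ f, L f * (exampleCertificate f : ℝ) ≤ 1 := hL.sum_mul_le fun f hf => by
    exact_mod_cast exampleCertificate_le_one f (hL.2.2 f hf) (h21 f hf)
  rw [sum_mul_exampleCertificate] at hcert
  linarith
end

section
/- Random serial dictatorship satisfies LEF and ex-post Pareto efficiency: for every instance of the assignment problem with uncertain priorities, there exists a lottery L every simple assignment in whose support is Pareto efficient, such that for all agents i, j: Pr_{σ∼Σ}[σ(i)<σ(j)] ≤ Pr_{f∼L}[f(i) ≻_i f(j)] (hence the induced random assignment satisfies LEF). Moreover the induced random assignment satisfies ranked proportionality (PROP). -/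
open Finset

open Finset

section SDdef
variable {n m : ℕ}

/-- pick the best remaining item under ranking `π`, with fallback `fb`. -/
def pick (π : Equiv.Perm (Fin m)) (T : Finset (Fin m)) (fb : Fin m) : Fin m :=
  if h : (Tᶜ.image ⇑π).Nonempty then π.symm ((Tᶜ.image ⇑π).min' h) else fb

/-- items taken by the first `r` agents in serial dictatorship. -/
def taken (hm : n ≤ m) (π : Fin n → Equiv.Perm (Fin m)) (σ : Equiv.Perm (Fin n)) :
    ℕ → Finset (Fin m)
  | 0 => ∅
  | r + 1 =>
    if h : r < n then
      insert (pick (π (σ.symm ⟨r, h⟩)) (taken hm π σ r) (Fin.castLE hm (σ.symm ⟨r, h⟩)))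
        (taken hm π σ r)
    else taken hm π σ r

/-- the serial-dictatorship assignment for priority `σ`. -/
def sd (hm : n ≤ m) (π : Fin n → Equiv.Perm (Fin m)) (σ : Equiv.Perm (Fin n))
    (i : Fin n) : Fin m :=
  pick (π i) (taken hm π σ (σ i)) (Fin.castLE hm i)

variable (hm : n ≤ m) (π : Fin n → Equiv.Perm (Fin m)) (σ : Equiv.Perm (Fin n))

lemma taken_card_le : ∀ r, (taken hm π σ r).card ≤ r := by
  intro r
  induction r with
  | zero => simp [taken]
  | succ r ih =>
    rw [taken]
    split
    · exact le_trans (Finset.card_insert_le _ _) (by omega)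
    · omega

lemma taken_mono : ∀ {r s : ℕ}, r ≤ s → taken hm π σ r ⊆ taken hm π σ s := by
  intro r s h
  induction s with
  | zero => simpa [Nat.le_zero.mp h]
  | succ s ih =>
    rcases Nat.lt_or_ge r (s+1) with h' | h'
    · refine (ih (by omega)).trans ?_
      rw [taken]
      split
      · exact Finset.subset_insert _ _
      · exact subset_rfl
    · have : r = s + 1 := by omega
      subst this; exact subset_rfl

lemma compl_nonempty {r : ℕ} (hr : r < n) (i : Fin n) :
    (((taken hm π σ r)ᶜ).image ⇑(π i)).Nonempty := by
  have h1 : (taken hm π σ r).card < m := lt_of_le_of_lt (taken_card_le hm π σ r) (lt_of_lt_of_le hr hm)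
  have h2 : ((taken hm π σ r)ᶜ).Nonempty := by
    rw [← Finset.card_pos, Finset.card_compl]
    simp only [Fintype.card_fin]
    omega
  exact h2.image _

lemma pick_eq (i : Fin n) (hr : ((σ i : ℕ)) < n := σ i |>.isLt) :
    True := trivial

lemma sd_not_mem : sd hm π σ i ∉ taken hm π σ (σ i) := by
  have hne := compl_nonempty hm π σ (σ i).isLt i
  rw [sd, pick, dif_pos hne]
  have hmem := Finset.min'_mem _ hne
  rcases Finset.mem_image.mp hmem with ⟨x, hx, hx2⟩
  rw [← hx2, Equiv.symm_apply_apply]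
  simpa using hx

lemma sd_min {i : Fin n} {y : Fin m} (hy : y ∉ taken hm π σ (σ i)) :
    π i (sd hm π σ i) ≤ π i y := by
  have hne := compl_nonempty hm π σ (σ i).isLt i
  rw [sd, pick, dif_pos hne, Equiv.apply_symm_apply]
  exact Finset.min'_le _ _ (Finset.mem_image_of_mem _ (by simpa using hy))

lemma taken_succ (i : Fin n) :
    taken hm π σ ((σ i : ℕ) + 1) = insert (sd hm π σ i) (taken hm π σ (σ i)) := by
  rw [taken, dif_pos (σ i).isLt]
  congr 1
  · have : σ.symm ⟨(σ i : ℕ), (σ i).isLt⟩ = i := by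
      simp [Fin.eta]
    rw [this]; rfl

lemma sd_mem_of_lt {i j : Fin n} (h : σ i < σ j) : sd hm π σ i ∈ taken hm π σ (σ j) := by
  have h1 : sd hm π σ i ∈ taken hm π σ ((σ i : ℕ) + 1) := by
    rw [taken_succ]; exact Finset.mem_insert_self _ _
  exact taken_mono hm π σ (by exact_mod_cast h) h1

lemma sd_injective : Function.Injective (sd hm π σ) := by
  intro i j hij
  by_contra hne
  have hσ : σ i ≠ σ j := fun h => hne (σ.injective h)
  rcases lt_or_gt_of_ne hσ with h | h
  · exact sd_not_mem hm π σ (hij ▸ sd_mem_of_lt hm π σ h)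
  · exact sd_not_mem hm π σ (hij ▸ sd_mem_of_lt hm π σ h)

lemma sd_envyfree {i j : Fin n} (h : σ i < σ j) :
    π i (sd hm π σ i) < π i (sd hm π σ j) := by
  have hj : sd hm π σ j ∉ taken hm π σ (σ i) :=
    fun hmem => sd_not_mem hm π σ (taken_mono hm π σ (by exact_mod_cast h.le) hmem)
  have hle := sd_min hm π σ hj
  have hne : sd hm π σ i ≠ sd hm π σ j :=
    fun he => (ne_of_lt h) (congrArg σ (sd_injective hm π σ he)) 
  exact lt_of_le_of_ne hle (fun he => hne ((π i).injective he))

lemma sd_rank (i : Fin n) : (π i (sd hm π σ i) : ℕ) ≤ (σ i : ℕ) := by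
  -- there is an item of rank ≤ σ i not yet taken
  set T := taken hm π σ (σ i) with hT
  have hcard : T.card ≤ (σ i : ℕ) := taken_card_le hm π σ _
  set c : Fin m := ⟨(σ i : ℕ), lt_of_lt_of_le (σ i).isLt hm⟩ with hc
  have hB : ((Finset.Iic c).image ⇑(π i).symm).card = (σ i : ℕ) + 1 := by
    rw [Finset.card_image_of_injective _ (π i).symm.injective]
    simp [Nat.card_Iic, hc]
  have hex : ∃ y ∈ (Finset.Iic c).image ⇑(π i).symm, y ∉ T := by
    by_contra hcon
    push_neg at hcon
    have := Finset.card_le_card hcon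
    omega
  rcases hex with ⟨y, hy1, hy2⟩
  rcases Finset.mem_image.mp hy1 with ⟨r, hr1, hr2⟩
  have h1 : π i (sd hm π σ i) ≤ π i y := sd_min hm π σ hy2
  have h2 : π i y = r := by rw [← hr2, Equiv.apply_symm_apply]
  have : (r : ℕ) ≤ (σ i : ℕ) := by
    have := Finset.mem_Iic.mp hr1
    simpa [hc, Fin.le_def] using this
  calc (π i (sd hm π σ i) : ℕ) ≤ (π i y : ℕ) := h1
    _ = (r : ℕ) := by rw [h2]
    _ ≤ (σ i : ℕ) := this

lemma taken_eq_image : ∀ r : ℕ,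
    taken hm π σ r = (Finset.univ.filter (fun j : Fin n => (σ j : ℕ) < r)).image (sd hm π σ) := by
  intro r
  induction r with
  | zero => simp [taken]
  | succ r ih =>
    rw [taken]
    split
    · rename_i h
      set a := σ.symm ⟨r, h⟩ with ha
      have hσa : (σ a : ℕ) = r := by rw [ha]; simp
      have hfil : (Finset.univ.filter (fun j : Fin n => (σ j : ℕ) < r + 1))
          = insert a (Finset.univ.filter (fun j : Fin n => (σ j : ℕ) < r)) := by
        ext j
        simp only [Finset.mem_filter, Finset.mem_univ, true_and, Finset.mem_insert]
        constructor
        · intro hj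
          rcases Nat.lt_or_ge (σ j : ℕ) r with h' | h'
          · exact Or.inr h'
          · left
            have h2 : (σ j : ℕ) = (σ a : ℕ) := by omega
            exact σ.injective (Fin.ext h2)
        · rintro (rfl | hj)
          · omega
          · omega
      rw [hfil, Finset.image_insert, ← ih]
      congr 1
      have : pick (π a) (taken hm π σ r) (Fin.castLE hm a) = sd hm π σ a := by
        rw [sd]
        congr 1 <;> rw [hσa]
      rw [this]
    · rename_i h
      rw [ih]
      congr 1
      ext j
      simp only [Finset.mem_filter, Finset.mem_univ, true_and]
      have := (σ j).isLt
      omega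

lemma sd_pareto : ParetoEff π (sd hm π σ) := by
  rintro ⟨g, hg, hweak, i0, hstrict⟩
  have key : ∀ r : ℕ, ∀ i : Fin n, (σ i : ℕ) = r → g i = sd hm π σ i := by
    intro r
    induction r using Nat.strong_induction_on with
    | _ r ih =>
      intro i hi
      have hgi : g i ∉ taken hm π σ (σ i) := by
        rw [taken_eq_image]
        intro hmem
        rcases Finset.mem_image.mp hmem with ⟨j, hj, hj2⟩
        simp only [Finset.mem_filter, Finset.mem_univ, true_and] at hj
        have hji : j ≠ i := by
          intro h; subst h; omega
        have h1 : g j = sd hm π σ j := ih (σ j : ℕ) (by omega) j rfl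
        have h2 : g j = g i := by rw [h1, hj2]
        exact hji (hg h2)
      have hle := sd_min hm π σ hgi
      rcases hweak i with h | h
      · exact h
      · exact absurd (lt_of_le_of_lt hle h) (lt_irrefl _)
  have hfin := key (σ i0 : ℕ) i0 rfl
  rw [hfin] at hstrict
  exact lt_irrefl _ hstrict

end SDdef

section sums
variable {α β : Type*} [Fintype α] [DecidableEq β]

lemma sum_fiber (g : α → β) (w : α → ℝ) (F : Finset β) :
    ∑ f ∈ F, ∑ a ∈ Finset.univ.filter (fun a => g a = f), w a
      = ∑ a ∈ Finset.univ.filter (fun a => g a ∈ F), w a := by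
  simp only [Finset.sum_filter]
  rw [Finset.sum_comm]
  refine Finset.sum_congr rfl fun a _ => ?_
  rw [Finset.sum_ite_eq F (g a) (fun _ => w a)]

lemma sum_Iic_fiber {m : ℕ} (w : α → ℝ) (h : α → ℕ) (hh : ∀ a, h a < m) (t : Fin m) :
    ∑ r ∈ Finset.Iic t, ∑ a ∈ Finset.univ.filter (fun a => h a = (r : ℕ)), w a
      = ∑ a ∈ Finset.univ.filter (fun a => h a ≤ (t : ℕ)), w a := by
  simp only [Finset.sum_filter]
  rw [Finset.sum_comm]
  refine Finset.sum_congr rfl fun a _ => ?_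
  have : ∀ r : Fin m, (h a = (r : ℕ)) ↔ r = ⟨h a, hh a⟩ := by
    intro r
    constructor
    · intro h1; exact Fin.ext h1.symm
    · intro h1; rw [h1]
  simp only [this]
  rw [Finset.sum_ite_eq' (Finset.Iic t) (⟨h a, hh a⟩ : Fin m) (fun _ => w a)]
  simp [Finset.mem_Iic, Fin.le_def]

end sums

/-- **Theorem (Random Serial Dictatorship).** For every instance there is a lottery, every
assignment in whose support is Pareto efficient, which witnesses LEF; moreover its induced
random assignment satisfies PROP. -/
theorem rsd_expost_LEF_PROP (n m : ℕ) (hm : n ≤ m)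
    (π : Fin n → Equiv.Perm (Fin m)) (ρ : Equiv.Perm (Fin n) → ℝ)
    (hρ : IsRandomPriority ρ) :
    ∃ L : (Fin n → Fin m) → ℝ, IsLottery L ∧
      (∀ f, L f ≠ 0 → ParetoEff π f) ∧
      (∀ i j : Fin n, prHigher ρ i j ≤ prPrefers π L i j) ∧
      PROP π ρ (induced L) := by
  classical
  obtain ⟨hρ0, hρ1⟩ := hρ
  set L : (Fin n → Fin m) → ℝ :=
    fun f => ∑ σ ∈ Finset.univ.filter (fun σ => sd hm π σ = f), ρ σ with hL
  have hLnn : ∀ f, 0 ≤ L f := fun f => Finset.sum_nonneg fun σ _ => hρ0 σ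
  have hsupp : ∀ f, L f ≠ 0 → ∃ σ, sd hm π σ = f := by
    intro f hf
    by_contra hcon
    push_neg at hcon
    apply hf
    rw [hL]
    apply Finset.sum_eq_zero
    intro σ hσ
    exact absurd (Finset.mem_filter.mp hσ).2 (hcon σ)
  have hLsum : ∑ f, L f = 1 := by
    rw [hL]
    rw [sum_fiber (fun σ => sd hm π σ) ρ Finset.univ]
    simpa using hρ1
  refine ⟨L, ⟨hLnn, hLsum, ?_⟩, ?_, ?_, ?_⟩
  · intro f hf
    obtain ⟨σ, rfl⟩ := hsupp f hf
    exact sd_injective hm π σ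
  · intro f hf
    obtain ⟨σ, rfl⟩ := hsupp f hf
    exact sd_pareto hm π σ
  · intro i j
    rw [prPrefers, hL]
    rw [sum_fiber (fun σ => sd hm π σ) ρ _]
    rw [prHigher]
    apply Finset.sum_le_sum_of_subset_of_nonneg
    · intro σ hσ
      simp only [Finset.mem_filter, Finset.mem_univ, true_and] at *
      exact sd_envyfree hm π σ hσ
    · intro σ _ _; exact hρ0 σ
  · intro i t
    -- baseline side
    have hb : ∑ r ∈ Finset.Iic t, baseline π ρ i ((π i).symm r)
        = ∑ σ ∈ Finset.univ.filter (fun σ => ((σ i : ℕ)) ≤ (t : ℕ)), ρ σ := by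
      have : ∀ r : Fin m, baseline π ρ i ((π i).symm r)
          = ∑ σ ∈ Finset.univ.filter (fun σ => ((σ i : ℕ)) = (r : ℕ)), ρ σ := by
        intro r
        rw [baseline]
        congr 1
        ext σ
        simp
      simp only [this]
      exact sum_Iic_fiber ρ (fun σ => (σ i : ℕ)) (fun σ => lt_of_lt_of_le (σ i).isLt hm) t
    have hi : ∑ r ∈ Finset.Iic t, induced L i ((π i).symm r)
        = ∑ σ ∈ Finset.univ.filter (fun σ => ((π i (sd hm π σ i) : ℕ)) ≤ (t : ℕ)), ρ σ := by
      have h1 : ∀ r : Fin m, induced L i ((π i).symm r)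
          = ∑ σ ∈ Finset.univ.filter (fun σ => ((π i (sd hm π σ i) : ℕ)) = (r : ℕ)), ρ σ := by
        intro r
        rw [induced, hL]
        rw [sum_fiber (fun σ => sd hm π σ) ρ _]
        congr 1
        ext σ
        simp only [Finset.mem_filter, Finset.mem_univ, true_and]
        constructor
        · intro h; rw [h]; simp
        · intro h
          have : π i (sd hm π σ i) = r := Fin.ext h
          rw [← this]; simp
      simp only [h1]
      exact sum_Iic_fiber ρ (fun σ => (π i (sd hm π σ i) : ℕ)) (fun σ => (π i _).isLt) t
    rw [hb, hi]
    apply Finset.sum_le_sum_of_subset_of_nonneg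
    · intro σ hσ
      simp only [Finset.mem_filter, Finset.mem_univ, true_and] at *
      exact le_trans (sd_rank hm π σ i) hσ
    · intro σ _ _; exact hρ0 σ
end

section
/- SEF does not imply LEF: in the instance with 2 agents and 2 items a, b, where both agents prefer a to b and the random priority is the point mass on the priority with σ(1) < σ(2), the random assignment giving each agent probability 1/2 of item a and probability 1/2 of item b satisfies SEF but does not satisfy LEF. -/
open Finset

/-!
When all agents receive the same row, every `SD` comparison in SEF is an equality, so SEF holds
for any priority. LEF fails: agent `0` has priority over agent `1` with probability `1`, but she
can prefer her item to agent `1`'s only when she holds the top item, which happens with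
probability `1/2`.
-/

theorem SD.refl {m : ℕ} (π : Equiv.Perm (Fin m)) (X : Fin m → ℝ) : SD π X X :=
  fun _ => le_rfl

theorem sef_const {n m : ℕ} (π : Fin n → Equiv.Perm (Fin m)) (ρ : Equiv.Perm (Fin n) → ℝ)
    (x : Fin m → ℝ) : SEF π ρ (fun _ => x) :=
  fun i _ _ => SD.refl (π i) x

theorem prHigher_ite_eq {n : ℕ} (σ₀ : Equiv.Perm (Fin n)) (i j : Fin n) :
    prHigher (fun σ => if σ = σ₀ then (1 : ℝ) else 0) i j = if σ₀ i < σ₀ j then 1 else 0 := by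
  simp [prHigher]

theorem prPrefers_add_induced_le {n m : ℕ} (π : Fin n → Equiv.Perm (Fin (m + 1)))
    {L : (Fin n → Fin (m + 1)) → ℝ} (hL : ∀ f, 0 ≤ L f) (i j : Fin n) {k : Fin (m + 1)}
    (hk : π i k = Fin.last m) : prPrefers π L i j + induced L i k ≤ ∑ f, L f := by
  have hdisj : Disjoint (univ.filter fun f : Fin n → Fin (m + 1) => π i (f i) < π i (f j))
      (univ.filter fun f => f i = k) := by
    refine Finset.disjoint_filter.mpr fun f _ hlt hfk => ?_
    rw [hfk, hk] at hlt
    exact (Fin.le_last _).not_gt hlt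
  rw [prPrefers, induced, ← Finset.sum_union hdisj]
  exact Finset.sum_le_univ_sum_of_nonneg hL

/-- **Example (SEF does not imply LEF).** Two agents, two items, both agents prefer item `0`
to item `1`; agent `0` has higher priority with probability `1`. The half–half random
assignment satisfies SEF but not LEF. -/
theorem SEF_not_LEF_example :
    SEF (fun _ : Fin 2 => Equiv.refl (Fin 2))
        (fun σ : Equiv.Perm (Fin 2) => if σ = Equiv.refl (Fin 2) then (1 : ℝ) else 0)
        (fun _ _ => 1 / 2) ∧
    ¬ LEF (fun _ : Fin 2 => Equiv.refl (Fin 2))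
        (fun σ : Equiv.Perm (Fin 2) => if σ = Equiv.refl (Fin 2) then (1 : ℝ) else 0)
        (fun _ _ => 1 / 2) := by
  refine ⟨sef_const _ _ _, ?_⟩
  rintro ⟨L, ⟨hL, hsum, -⟩, hind, hlef⟩
  have hhigher := hlef 0 1
  rw [prHigher_ite_eq] at hhigher
  have hbound := prPrefers_add_induced_le (fun _ : Fin 2 => Equiv.refl (Fin 2)) hL 0 1
    (k := 1) rfl
  rw [hind, hsum] at hbound
  norm_num at hhigher hbound
  linarith
end

section
/- LEF does not imply SEF: in the instance with 2 agents and 100 items i_1 ≻ i_2 ≻ … ≻ i_100 (both agents have this same preference order), and random priority Σ uniform over the two possible priorities (each with probability 1/2), the random assignment that gives agent 1 probability 1/2 each of items i_1 and i_100, and gives agent 2 probability 1/2 each of items i_99 and i_100, satisfies LEF but does not satisfy SEF. -/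
open Finset

/-!
Flip a fair coin between the simple assignments `(0, 99)` and `(99, 98)`. Each agent gets her own
item strictly ahead of the other's in one of the two outcomes, so she prefers her item with
probability `1/2`, which is exactly her chance of having the higher priority under the uniform
priority: this is LEF. But both agents have the same rank distribution, so SEF would require agent
`1`'s allocation to dominate agent `0`'s, and it fails already at the top item `0`, which agent `0`
gets with probability `1/2` and agent `1` never.
-/

section Priority

variable {n : ℕ} {ρ : Equiv.Perm (Fin n) → ℝ} {i j : Fin n}

theorem prHigher_self : prHigher ρ i i = 0 := by
  simp [prHigher]

theorem prHigher_add_prHigher (hij : i ≠ j) :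
    prHigher ρ i j + prHigher ρ j i = ∑ σ, ρ σ := by
  rw [prHigher, prHigher, ← sum_filter_add_sum_filter_not univ (fun σ => σ i < σ j)]
  congr 1
  refine sum_congr (filter_congr fun σ _ => ?_) fun _ _ => rfl
  have hσ : σ j ≠ σ i := σ.injective.ne hij.symm
  exact ⟨fun h => not_lt.2 h.le, fun h => lt_of_le_of_ne (not_lt.1 h) hσ⟩

theorem prHigher_comm_of_swap_invariant (hρ : ∀ σ, ρ (σ * Equiv.swap i j) = ρ σ) :
    prHigher ρ i j = prHigher ρ j i := by
  simp only [prHigher, sum_filter]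
  exact Fintype.sum_equiv (Equiv.mulRight (Equiv.swap i j)) _ _ fun σ => by simp [hρ]

theorem prHigher_eq_half_of_swap_invariant (hρ : ∀ σ, ρ (σ * Equiv.swap i j) = ρ σ)
    (hsum : ∑ σ, ρ σ = 1) (hij : i ≠ j) : prHigher ρ i j = 1 / 2 := by
  linarith [prHigher_add_prHigher (ρ := ρ) hij, prHigher_comm_of_swap_invariant hρ]

theorem rankDist_eq_of_swap_invariant (hρ : ∀ σ, ρ (σ * Equiv.swap i j) = ρ σ) (r : Fin n) :
    rankDist ρ i r = rankDist ρ j r := by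
  simp only [rankDist, sum_filter]
  exact Fintype.sum_equiv (Equiv.mulRight (Equiv.swap i j)) _ _ fun σ => by simp [hρ]

end Priority

section Dominance

variable {n m : ℕ}

theorem SD.apply_symm_zero_le {π : Equiv.Perm (Fin (m + 1))} {X Y : Fin (m + 1) → ℝ}
    (h : SD π X Y) : Y (π.symm 0) ≤ X (π.symm 0) := by
  simpa [SD, ← bot_eq_zero, Iic_bot] using h 0

theorem SEF.sd_of_rankDist_eq {π : Fin n → Equiv.Perm (Fin m)} {ρ : Equiv.Perm (Fin n) → ℝ}
    {P : Fin n → Fin m → ℝ} (h : SEF π ρ P) {i j : Fin n}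
    (hr : ∀ r, rankDist ρ j r = rankDist ρ i r) : SD (π i) (P i) (P j) :=
  h i j fun _ => (sum_congr rfl fun r _ => hr r).le

end Dominance

section FiftyFifty

variable {n m : ℕ}

noncomputable def fiftyFifty (f g : Fin n → Fin m) : (Fin n → Fin m) → ℝ :=
  fun h => (if h = f then 1 / 2 else 0) + (if h = g then 1 / 2 else 0)

theorem sum_fiftyFifty (f g : Fin n → Fin m) (S : Finset (Fin n → Fin m)) :
    ∑ h ∈ S, fiftyFifty f g h =
      (if f ∈ S then 1 / 2 else 0) + (if g ∈ S then 1 / 2 else 0) := by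
  simp only [fiftyFifty, sum_add_distrib, sum_ite_eq']

theorem isLottery_fiftyFifty {f g : Fin n → Fin m} (hf : Function.Injective f)
    (hg : Function.Injective g) : IsLottery (fiftyFifty f g) := by
  refine ⟨fun h => by unfold fiftyFifty; positivity, by rw [sum_fiftyFifty]; norm_num, ?_⟩
  intro h hh
  by_cases hhf : h = f
  · exact hhf ▸ hf
  by_cases hhg : h = g
  · exact hhg ▸ hg
  simp [fiftyFifty, hhf, hhg] at hh

theorem induced_fiftyFifty (f g : Fin n → Fin m) (i : Fin n) (j : Fin m) :
    induced (fiftyFifty f g) i j =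
      (if f i = j then 1 / 2 else 0) + (if g i = j then 1 / 2 else 0) := by
  simp [induced, sum_fiftyFifty]

theorem prPrefers_fiftyFifty (π : Fin n → Equiv.Perm (Fin m)) (f g : Fin n → Fin m)
    (i j : Fin n) :
    prPrefers π (fiftyFifty f g) i j =
      (if π i (f i) < π i (f j) then 1 / 2 else 0) +
        (if π i (g i) < π i (g j) then 1 / 2 else 0) := by
  simp [prPrefers, sum_fiftyFifty]

theorem LEF_fiftyFifty {π : Fin n → Equiv.Perm (Fin m)} {ρ : Equiv.Perm (Fin n) → ℝ}
    (hρ : ∀ i j σ, ρ (σ * Equiv.swap i j) = ρ σ) (hsum : ∑ σ, ρ σ = 1)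
    {f g : Fin n → Fin m} (hf : Function.Injective f) (hg : Function.Injective g)
    (hfg : ∀ i j, i ≠ j → π i (f i) < π i (f j) ∨ π i (g i) < π i (g j)) :
    LEF π ρ (induced (fiftyFifty f g)) := by
  refine ⟨fiftyFifty f g, isLottery_fiftyFifty hf hg, rfl, fun i j => ?_⟩
  rw [prPrefers_fiftyFifty]
  rcases eq_or_ne i j with rfl | hij
  · simp [prHigher_self]
  rw [prHigher_eq_half_of_swap_invariant (hρ i j) hsum hij]
  rcases hfg i j hij with h | h <;> simp only [h, if_true] <;> split_ifs <;> norm_num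

end FiftyFifty

/-- **Example (LEF does not imply SEF).** Two agents, `100` items `0 ≻ 1 ≻ ⋯ ≻ 99` (same
preferences for both agents), uniform random priority. Agent `0` gets items `0` and `99`
with probability `1/2` each; agent `1` gets items `98` and `99` with probability `1/2`
each. This random assignment satisfies LEF but not SEF. -/
theorem LEF_not_SEF_example :
    LEF (fun _ : Fin 2 => Equiv.refl (Fin 100))
        (fun _ : Equiv.Perm (Fin 2) => (1 : ℝ) / 2)
        (fun i j => if i = 0 then (if j = 0 ∨ j = 99 then (1 : ℝ) / 2 else 0)
                    else (if j = 98 ∨ j = 99 then (1 : ℝ) / 2 else 0)) ∧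
    ¬ SEF (fun _ : Fin 2 => Equiv.refl (Fin 100))
        (fun _ : Equiv.Perm (Fin 2) => (1 : ℝ) / 2)
        (fun i j => if i = 0 then (if j = 0 ∨ j = 99 then (1 : ℝ) / 2 else 0)
                    else (if j = 98 ∨ j = 99 then (1 : ℝ) / 2 else 0)) := by
  have hP : induced (fiftyFifty ![0, 99] ![99, 98]) =
      fun (i : Fin 2) (j : Fin 100) => if i = 0 then (if j = 0 ∨ j = 99 then (1 : ℝ) / 2 else 0)
        else (if j = 98 ∨ j = 99 then (1 : ℝ) / 2 else 0) := by
    funext i j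
    rw [induced_fiftyFifty]
    fin_cases i <;> by_cases h₁ : j = 0 <;> by_cases h₂ : j = 98 <;> by_cases h₃ : j = 99 <;>
      simp_all [eq_comm (b := j)]
  refine ⟨hP ▸ LEF_fiftyFifty (fun _ _ _ => rfl) ?_ (by decide) (by decide) (by decide), ?_⟩
  · simp [Fintype.card_perm]
  intro hSEF
  have hSD := hSEF.sd_of_rankDist_eq (i := 1) (j := 0)
    (rankDist_eq_of_swap_invariant fun _ => rfl)
  have hTop := hSD.apply_symm_zero_le
  norm_num [Fin.ext_iff] at hTop
end
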